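/- arXiv:2006.04860 — 2 statements merged into one kernel-verified Lean document; each statement's English description precedes it below -/
import Mathlib

section
/- With R a linear isometry of order m, M = Id − R, D = Fix R, and T = (1/(2m)) Σ_{k=1}^{m−1} (m−2k) R^k: the set-valued inverse of M satisfies M^{-1} = (1/2) Id + T + N_{D^⊥}; that is, for y ∈ D^⊥, the solution set {x : Mx = y} equals {(1/2)y + Ty + d : d ∈ D}, and M^{-1}y = ∅ for y ∉ D^⊥. -/
/-! With `P = (1/m) ∑_{k<m} R^k`, a telescoping computation using `R^m = 1` gives the operator
identity `(Id − R)((1/2)Id + T) = Id − P`. Since `R` preserves inner products and fixes `P y`,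
`‖P y‖² = ⟪y, P y⟫`, which vanishes for `y ∈ Dᗮ`; so `(1/2)y + Ty` solves `Mx = y` and the
solution set is this point plus `ker M = D`. Conversely `ran M ⊆ Dᗮ`, because
`⟪d, x − Rx⟫ = ⟪d, x⟫ − ⟪Rd, Rx⟫ = 0` for `d ∈ D`. -/

open Finset RealInnerProductSpace

theorem mul_sum_range_pow_of_pow_eq_one {A : Type*} [Ring A] {a : A} {m : ℕ}
    (ha : a ^ m = 1) : a * ∑ k ∈ range m, a ^ k = ∑ k ∈ range m, a ^ k := by
  have h := (sum_range_succ' (a ^ ·) m).symm.trans (sum_range_succ (a ^ ·) m)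
  simp only [pow_zero, ha, pow_succ'] at h
  rw [mul_sum]
  exact add_right_cancel h

section Algebra

variable {A : Type*} [Ring A] [Algebra ℝ A]

theorem one_sub_mul_sum_range_smul_pow (a : A) (m : ℕ) :
    (1 - a) * ∑ k ∈ range m, ((m : ℝ) - 2 * k) • a ^ k =
      (m : ℝ) • (1 + a ^ m) - (2 : ℝ) • (a * ∑ k ∈ range m, a ^ k) := by
  induction m with
  | zero => simp
  | succ m ih =>
    have hsplit : ∑ k ∈ range (m + 1), (((m + 1 : ℕ) : ℝ) - 2 * k) • a ^ k =
        ∑ k ∈ range m, ((m : ℝ) - 2 * k) • a ^ k + ∑ k ∈ range m, a ^ k +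
          (1 - (m : ℝ)) • a ^ m := by
      rw [sum_range_succ, ← sum_add_distrib]
      congr 1
      · exact sum_congr rfl fun k _ => by push_cast; module
      · push_cast; module
    rw [hsplit, mul_add, mul_add, ih, mul_neg_geom_sum, mul_smul_comm, sub_mul, one_mul,
      sum_range_succ, mul_add, ← pow_succ']
    push_cast
    module

theorem one_sub_mul_half_add_smul_sum_Ico {a : A} {m : ℕ} (ha : a ^ m = 1) (hm : 0 < m) :
    (1 - a) * ((1 / 2 : ℝ) • 1 + (2 * (m : ℝ))⁻¹ • ∑ k ∈ Ico 1 m, ((m : ℝ) - 2 * k) • a ^ k) =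
      1 - (m : ℝ)⁻¹ • ∑ k ∈ range m, a ^ k := by
  have hm0 : (m : ℝ) ≠ 0 := Nat.cast_ne_zero.mpr hm.ne'
  have hfull := one_sub_mul_sum_range_smul_pow a m
  rw [sum_range_eq_add_Ico _ hm, ha, mul_sum_range_pow_of_pow_eq_one ha] at hfull
  simp only [Nat.cast_zero, mul_zero, sub_zero, pow_zero] at hfull
  rw [mul_add, mul_smul_comm, mul_smul_comm, mul_one,
    show (1 - a) * ∑ k ∈ Ico 1 m, ((m : ℝ) - 2 * k) • a ^ k =
      (m : ℝ) • (1 + 1) - (2 : ℝ) • ∑ k ∈ range m, a ^ k - (m : ℝ) • (1 - a) by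
    rw [← hfull, mul_add, mul_smul_comm, mul_one]; abel]
  match_scalars <;> field_simp <;> ring

end Algebra

section Isometry

variable {X : Type*} [NormedAddCommGroup X] [InnerProductSpace ℝ X] {R : X →L[ℝ] X}

theorem inner_pow_apply_of_apply_eq_self (hR : ∀ x y, ⟪R x, R y⟫ = ⟪x, y⟫) {s : X}
    (hs : R s = s) (k : ℕ) (y : X) : ⟪(R ^ k) y, s⟫ = ⟪y, s⟫ := by
  induction k with
  | zero => rfl
  | succ k ih =>
    calc ⟪(R ^ (k + 1)) y, s⟫ = ⟪R ((R ^ k) y), R s⟫ := by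
          rw [pow_succ', mul_apply_eq_comp, hs]
      _ = ⟪y, s⟫ := by rw [hR, ih]

theorem sum_range_pow_apply_eq_zero_of_mem_orthogonal (hR : ∀ x y, ⟪R x, R y⟫ = ⟪x, y⟫)
    {m : ℕ} (hRm : R ^ m = 1) {D : Submodule ℝ X} (hD : ∀ x, R x = x → x ∈ D) {y : X}
    (hy : y ∈ Dᗮ) : (∑ k ∈ range m, R ^ k) y = 0 := by
  set s := (∑ k ∈ range m, R ^ k) y
  have hs : R s = s := by
    rw [← mul_apply_eq_comp, mul_sum_range_pow_of_pow_eq_one hRm]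
  have hys : ⟪y, s⟫ = 0 := Submodule.inner_left_of_mem_orthogonal (hD s hs) hy
  refine inner_self_eq_zero (𝕜 := ℝ) |>.mp ?_
  calc ⟪s, s⟫ = ∑ k ∈ range m, ⟪(R ^ k) y, s⟫ := by
        rw [← sum_inner, ← _root_.sum_apply]
    _ = 0 := sum_eq_zero fun k _ => by rw [inner_pow_apply_of_apply_eq_self hR hs, hys]

theorem one_sub_apply_mem_orthogonal (hR : ∀ x y, ⟪R x, R y⟫ = ⟪x, y⟫) {D : Submodule ℝ X} (hD : ∀ x ∈ D, R x = x) (x : X) : (1 - R) x ∈ Dᗮ := by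
  intro d hd
  rw [sub_apply, one_apply_eq_self, inner_sub_right, ← hR d x, hD d hd, sub_self]

end Isometry

theorem setOf_apply_eq_eq_of_apply_eq {G H F : Type*} [AddCommGroup G] [AddGroup H]
    [FunLike F G H] [AddMonoidHomClass F G H] {f : F} {K : Set G}
    (hK : ∀ x, x ∈ K ↔ f x = 0) {x₀ : G} {y : H} (h₀ : f x₀ = y) :
    {x | f x = y} = {x | ∃ d ∈ K, x = x₀ + d} := by
  ext x
  constructor
  · intro hx
    refine ⟨x - x₀, (hK _).2 ?_, (add_sub_cancel x₀ x).symm⟩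
    rw [map_sub, Set.mem_ofPred_eq.mp hx, h₀, sub_self]
  · rintro ⟨d, hd, rfl⟩
    rw [Set.mem_ofPred_eq, map_add, h₀, (hK d).1 hd, add_zero]

theorem set_valued_inverse_displacement_general
    {X : Type*} [NormedAddCommGroup X] [InnerProductSpace ℝ X]
    (m : ℕ) (hm : 2 ≤ m) (R : X →L[ℝ] X) (hR : ∀ x, ‖R x‖ = ‖x‖) (hRm : R ^ m = 1)
    (D : Submodule ℝ X) (hD : ∀ x, x ∈ D ↔ R x = x) :
    ∀ y : X,
      (y ∈ Dᗮ →
        {x : X | ((1 : X →L[ℝ] X) - R) x = y} =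
          {x : X | ∃ d ∈ D,
            x = (1 / 2 : ℝ) • y +
              ((2 * (m : ℝ))⁻¹ • ∑ k ∈ Finset.Ico 1 m, ((m : ℝ) - 2 * k) • R ^ k) y + d}) ∧
      (y ∉ Dᗮ → {x : X | ((1 : X →L[ℝ] X) - R) x = y} = ∅) := by
  have hinner := (LinearMap.norm_map_iff_inner_map_map R).mp hR
  have hker : ∀ x, x ∈ D ↔ (1 - R) x = 0 := fun x => by
    rw [hD, sub_apply, one_apply_eq_self, sub_eq_zero, eq_comm]
  intro y
  refine ⟨fun hy => setOf_apply_eq_eq_of_apply_eq hker ?_, fun hy => ?_⟩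
  · calc _ = ((1 - R) * ((1 / 2 : ℝ) • 1 +
          (2 * (m : ℝ))⁻¹ • ∑ k ∈ Ico 1 m, ((m : ℝ) - 2 * k) • R ^ k)) y := rfl
      _ = y - (m : ℝ)⁻¹ • (∑ k ∈ range m, R ^ k) y := by
        rw [one_sub_mul_half_add_smul_sum_Ico hRm (by omega)]; rfl
      _ = y := by
        rw [sum_range_pow_apply_eq_zero_of_mem_orthogonal hinner hRm (fun x => (hD x).mpr) hy,
          smul_zero, sub_zero]
  · exact Set.eq_empty_of_forall_notMem fun x hx =>
      hy (hx ▸ one_sub_apply_mem_orthogonal hinner (fun x => (hD x).mp) x)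

/-- The set-valued inverse of `M = Id − R` satisfies `M⁻¹ = (1/2)Id + T + N_{Dᗮ}`:
for `y ∈ Dᗮ`, `{x : Mx = y} = (1/2)y + Ty + D`, and `{x : Mx = y} = ∅` for `y ∉ Dᗮ`. -/
theorem set_valued_inverse_displacement
    {X : Type*} [NormedAddCommGroup X] [InnerProductSpace ℝ X] [CompleteSpace X]
    (m : ℕ) (hm : 2 ≤ m) (R : X →L[ℝ] X) (hR : ∀ x, ‖R x‖ = ‖x‖) (hRm : R ^ m = 1)
    (D : Submodule ℝ X) (hD : ∀ x, x ∈ D ↔ R x = x) :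
    ∀ y : X,
      (y ∈ Dᗮ →
        {x : X | ((1 : X →L[ℝ] X) - R) x = y} =
          {x : X | ∃ d ∈ D,
            x = (1 / 2 : ℝ) • y +
              ((2 * (m : ℝ))⁻¹ • ∑ k ∈ Finset.Ico 1 m, ((m : ℝ) - 2 * k) • R ^ k) y + d}) ∧
      (y ∉ Dᗮ → {x : X | ((1 : X →L[ℝ] X) - R) x = y} = ∅) :=
  set_valued_inverse_displacement_general m hm R hR hRm D hD
end

section
/- With M = Id − R and M^† = Σ_{k=0}^{m−1} ((m−1−2k)/(2m)) R^k: for every y ∈ D^⊥, the solution set {x : Mx = y} equals {M^† y + d : d ∈ D}. -/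
/-!
Summation by parts gives the operator identity `(1 - R) M† = 1 - (1/m) ∑_{k<m} R^k`, using only
`R^m = 1` and that the coefficients of `M†` drop by `1/m` at each step. For `y ⊥ D` the orbit sum
`∑_{k<m} R^k y` is fixed by `R`, so it lies in `D`, and it is orthogonal to `D` because the
isometry `R` fixes `D` and hence preserves `Dᗮ`; so it vanishes and `M† y` solves `M x = y`.
The solution set is then this particular solution plus `ker M = D`.
-/

open Finset

theorem sum_range_pow_succ_of_pow_eq_one {A : Type*} [Ring A] {r : A} {m : ℕ}
    (hr : r ^ m = 1) : ∑ k ∈ range m, r ^ (k + 1) = ∑ k ∈ range m, r ^ k := by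
  have h := (sum_range_succ' (r ^ ·) m).symm.trans (sum_range_succ (r ^ ·) m)
  rwa [pow_zero, hr, add_left_inj] at h

theorem one_sub_mul_sum_smul_pow {𝕜 A : Type*} [CommRing 𝕜] [Ring A] [Algebra 𝕜 A] (r : A)
    (c : ℕ → 𝕜) (b : 𝕜) (hc : ∀ k, c (k + 1) = c k - b) (m : ℕ) :
    (1 - r) * ∑ k ∈ range m, c k • r ^ k =
      c 0 • 1 - c m • r ^ m - b • ∑ k ∈ range m, r ^ (k + 1) := by
  induction m with
  | zero => simp
  | succ m ih =>
    rw [sum_range_succ, mul_add, ih, sum_range_succ, hc, mul_smul_comm, sub_mul, one_mul,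
      ← pow_succ', sub_smul, smul_add, smul_sub]
    abel

theorem setOf_apply_eq_apply_eq {K M M₂ : Type*} [Ring K] [AddCommGroup M] [AddCommGroup M₂]
    [Module K M] [Module K M₂] (f : M →ₗ[K] M₂) (x₀ : M) :
    {x | f x = f x₀} = {x | ∃ d ∈ LinearMap.ker f, x = x₀ + d} := by
  ext x
  refine ⟨fun hx => ⟨x - x₀, LinearMap.sub_mem_ker_iff.mpr hx, by abel⟩, ?_⟩
  rintro ⟨d, hd, rfl⟩
  simp [LinearMap.mem_ker.mp hd]

section Isometry

variable {𝕜 X : Type*} [RCLike 𝕜] [NormedAddCommGroup X] [InnerProductSpace 𝕜 X]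
  {R : X →L[𝕜] X} {D : Submodule 𝕜 X}

theorem apply_mem_orthogonal_of_norm_map (hR : ∀ x, ‖R x‖ = ‖x‖) (hD : ∀ d ∈ D, R d = d)
    {y : X} (hy : y ∈ Dᗮ) : R y ∈ Dᗮ := by
  rw [Submodule.mem_orthogonal] at hy ⊢
  intro d hd
  rw [← hD d hd, (LinearMap.norm_map_iff_inner_map_map R).mp hR, hy d hd]

theorem pow_apply_mem_orthogonal_of_norm_map (hR : ∀ x, ‖R x‖ = ‖x‖) (hD : ∀ d ∈ D, R d = d)
    {y : X} (hy : y ∈ Dᗮ) (k : ℕ) : (R ^ k) y ∈ Dᗮ := by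
  induction k with
  | zero => rwa [pow_zero, one_apply_eq_self]
  | succ k ih =>
    rw [pow_succ', mul_apply_eq_comp]
    exact apply_mem_orthogonal_of_norm_map hR hD ih

theorem sum_pow_apply_eq_zero_of_mem_orthogonal (hR : ∀ x, ‖R x‖ = ‖x‖) {m : ℕ}
    (hRm : R ^ m = 1) (hD : ∀ x, x ∈ D ↔ R x = x) {y : X} (hy : y ∈ Dᗮ) :
    (∑ k ∈ range m, R ^ k) y = 0 := by
  have hfixed : (∑ k ∈ range m, R ^ k) y ∈ D := by
    rw [hD, ← mul_apply_eq_comp, mul_sum]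
    simp_rw [← pow_succ']
    rw [sum_range_pow_succ_of_pow_eq_one hRm]
  have hperp : (∑ k ∈ range m, R ^ k) y ∈ Dᗮ := by
    rw [_root_.sum_apply]
    exact Submodule.sum_mem _ fun k _ =>
      pow_apply_mem_orthogonal_of_norm_map hR (fun d hd => (hD d).mp hd) hy k
  exact (Submodule.mem_bot 𝕜).mp (D.inf_orthogonal_eq_bot.le ⟨hfixed, hperp⟩)

end Isometry

theorem solution_set_via_moore_penrose_general
    {X : Type*} [NormedAddCommGroup X] [InnerProductSpace ℝ X]
    (m : ℕ) (hm : 2 ≤ m) (R : X →L[ℝ] X) (hR : ∀ x, ‖R x‖ = ‖x‖) (hRm : R ^ m = 1)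
    (D : Submodule ℝ X) (hD : ∀ x, x ∈ D ↔ R x = x) :
    ∀ y ∈ Dᗮ,
      {x : X | ((1 : X →L[ℝ] X) - R) x = y} =
        {x : X | ∃ d ∈ D,
          x = (∑ k ∈ Finset.range m, (((m : ℝ) - 1 - 2 * k) / (2 * m)) • R ^ k) y + d} := by
  intro y hy
  set c : ℕ → ℝ := fun k => ((m : ℝ) - 1 - 2 * k) / (2 * m)
  have hm0 : (m : ℝ) ≠ 0 := by exact_mod_cast (by omega : m ≠ 0)
  have hc : ∀ k, c (k + 1) = c k - (m : ℝ)⁻¹ := fun k => by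
    simp only [c]
    push_cast
    field_simp
    ring
  have hcm : c 0 - c m = 1 := by
    simp only [c]
    field_simp
    ring
  have hsolve : (1 - R) ((∑ k ∈ range m, c k • R ^ k) y) = y := by
    rw [← mul_apply_eq_comp, one_sub_mul_sum_smul_pow R c _ hc,
      sum_range_pow_succ_of_pow_eq_one hRm, hRm, ← sub_smul, hcm, one_smul, sub_apply,
      one_apply_eq_self, smul_apply,
      sum_pow_apply_eq_zero_of_mem_orthogonal hR hRm hD hy, smul_zero, sub_zero]
  have hker : LinearMap.ker ((1 - R : X →L[ℝ] X) : X →ₗ[ℝ] X) = D := by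
    ext x
    simp only [LinearMap.mem_ker, ContinuousLinearMap.coe_coe, sub_apply, one_apply_eq_self,
      sub_eq_zero, hD]
    exact eq_comm
  simpa only [ContinuousLinearMap.coe_coe, hsolve, hker] using
    setOf_apply_eq_apply_eq ((1 - R : X →L[ℝ] X) : X →ₗ[ℝ] X) ((∑ k ∈ range m, c k • R ^ k) y)

/-- For every `y ∈ Dᗮ`, the solution set `{x : Mx = y}` equals `M† y + D`,
where `M† = Σ_{k=0}^{m−1} ((m−1−2k)/(2m)) R^k`. -/
theorem solution_set_via_moore_penrose
    {X : Type*} [NormedAddCommGroup X] [InnerProductSpace ℝ X] [CompleteSpace X]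
    (m : ℕ) (hm : 2 ≤ m) (R : X →L[ℝ] X) (hR : ∀ x, ‖R x‖ = ‖x‖) (hRm : R ^ m = 1)
    (D : Submodule ℝ X) (hD : ∀ x, x ∈ D ↔ R x = x) :
    ∀ y ∈ Dᗮ,
      {x : X | ((1 : X →L[ℝ] X) - R) x = y} =
        {x : X | ∃ d ∈ D,
          x = (∑ k ∈ Finset.range m, (((m : ℝ) - 1 - 2 * k) / (2 * m)) • R ^ k) y + d} :=
  solution_set_via_moore_penrose_general m hm R hR hRm D hD
end
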